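/- arXiv:1011.4774 — 4 statements merged into one kernel-verified Lean document; each statement's English description precedes it below -/
import Mathlib

section
/- Let Q : ℝ₊² → ℝ be C¹, q-homogeneous with q ≥ 2, and satisfy Q_s(0,1) = 0 and Q_t(1,0) = 0. Then the extension Q̃(s,t) := Q(s⁺, t⁺), where s⁺ = max(s,0), is a C¹ function on all of ℝ². -/
/-!
Let `K` be the closed quadrant and `g(z) = (z₁⁺, z₂⁺)`, a `1`-Lipschitz retraction of `ℝ²` onto
`K`. Write `L = D_K Q (g z)` for the one-sided derivative of `Q` at `g z`. By homogeneity
`Q(r, t) = t^q Q(r/t, 1)` for `t > 0`, so `Q_s(0,1) = 0` forces `Q_s = 0` on the open face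
`{0} × (0, ∞)`, and by continuity of `DQ` also at the corner; likewise `Q_t = 0` on `[0, ∞) × {0}`.
Hence `L ∘ g` differs from `L` by a locally constant function near every `z` (in each coordinate,
either `g` is locally the identity or `L` kills that direction). Since `g` is Lipschitz, the
first-order expansion of `Q` at `g z` then shows that `Q ∘ g` has derivative `L` at `z`, and
`z ↦ D_K Q (g z)` is continuous.
-/

open Set Filter Topology

variable {E F G : Type*} [NormedAddCommGroup E] [NormedSpace ℝ E] [NormedAddCommGroup F]
  [NormedSpace ℝ F] [NormedAddCommGroup G] [NormedSpace ℝ G]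

theorem HasFDerivWithinAt.hasFDerivAt_comp_of_lipschitzWith {f : F → G} {f' : F →L[ℝ] G}
    {s : Set F} {g : E → F} {L : E →L[ℝ] G} {K : NNReal} {z : E}
    (hf : HasFDerivWithinAt f f' s (g z)) (hg : LipschitzWith K g) (hgs : ∀ w, g w ∈ s)
    (hfg : HasFDerivAt (fun w => f' (g w)) L z) :
    HasFDerivAt (fun w => f (g w)) L z := by
  have hg_tendsto : Tendsto g (𝓝 z) (𝓝[s] g z) :=
    tendsto_nhdsWithin_iff.2 ⟨hg.continuous.continuousAt, .of_forall hgs⟩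
  have hg_bigO : (fun w => g w - g z) =O[𝓝 z] fun w => w - z :=
    .of_bound K (.of_forall fun w => by simpa only [← dist_eq_norm] using hg.dist_le_mul w z)
  have hf_expand : (fun w => f (g w) - f (g z) - f' (g w - g z)) =o[𝓝 z] fun w => w - z :=
    (hf.isLittleO.comp_tendsto hg_tendsto).trans_isBigO hg_bigO
  refine .of_isLittleO ((hf_expand.add hfg.isLittleO).congr_left fun w => ?_)
  simp only [map_sub]
  abel

theorem fderivWithin_apply_eq_zero_of_hasDerivWithinAt {f : E → G} {s : Set E} {y v : E}
    (hf : DifferentiableWithinAt ℝ f s y) (hs : ∀ r : ℝ, 0 ≤ r → y + r • v ∈ s)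
    (h : HasDerivWithinAt (fun r : ℝ => f (y + r • v)) 0 (Ici 0) 0) :
    fderivWithin ℝ f s y v = 0 := by
  have hline : HasDerivWithinAt (fun r : ℝ => y + r • v) v (Ici 0) 0 := by
    simpa using (((hasDerivAt_id (0 : ℝ)).smul_const v).const_add y).hasDerivWithinAt
  have hchain := hf.hasFDerivWithinAt.comp_hasDerivWithinAt_of_eq (0 : ℝ) hline hs (by simp)
  exact (uniqueDiffOn_Ici (0 : ℝ) 0 self_mem_Ici).eq_deriv _ hchain h

theorem max_zero_sub_smul_eventuallyEq {x : ℝ} {c : G} (hc : x ≤ 0 → c = 0) :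
    (fun y : ℝ => (max y 0 - y) • c) =ᶠ[𝓝 x] fun _ => (max x 0 - x) • c := by
  rcases le_or_gt x 0 with hx | hx
  · simp [hc hx]
  · filter_upwards [lt_mem_nhds hx] with y hy
    simp [max_eq_left hy.le, max_eq_left hx.le]

theorem ContinuousLinearMap.hasFDerivAt_comp_posPart (L : ℝ × ℝ →L[ℝ] G) {z : ℝ × ℝ}
    (h₁ : z.1 ≤ 0 → L (1, 0) = 0) (h₂ : z.2 ≤ 0 → L (0, 1) = 0) :
    HasFDerivAt (fun w : ℝ × ℝ => L (max w.1 0, max w.2 0)) L z := by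
  have hsplit (w : ℝ × ℝ) : L (max w.1 0, max w.2 0) =
      L w + ((max w.1 0 - w.1) • L (1, 0) + (max w.2 0 - w.2) • L (0, 1)) := by
    rw [← L.map_smul, ← L.map_smul, ← map_add, ← map_add]
    congr 1
    ext <;> simp
  have hconst :=
    ((max_zero_sub_smul_eventuallyEq h₁).comp_tendsto continuous_fst.continuousAt).add
      ((max_zero_sub_smul_eventuallyEq h₂).comp_tendsto continuous_snd.continuousAt)
  refine (L.hasFDerivAt.add_const ((max z.1 0 - z.1) • L (1, 0) + (max z.2 0 - z.2) • L (0, 1))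
    ).congr_of_eventuallyEq ?_
  filter_upwards [hconst] with w hw
  rw [hsplit]
  exact congrArg (L w + ·) hw

theorem uniqueDiffOn_Ici_prod (a : ℝ × ℝ) : UniqueDiffOn ℝ (Ici a) :=
  (uniqueDiffOn_Ici a.1).prod (uniqueDiffOn_Ici a.2)

theorem fderivWithin_Ici_apply_one_zero_eq_zero_of_homogeneous {Q : ℝ × ℝ → ℝ} {q : ℝ}
    (hQ : ContDiffOn ℝ 1 Q (Ici 0))
    (hhom : ∀ θ : ℝ, 0 < θ → ∀ s t : ℝ, 0 ≤ s → 0 ≤ t → Q (θ * s, θ * t) = θ ^ q * Q (s, t))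
    (hQs : HasDerivWithinAt (fun s : ℝ => Q (s, 1)) 0 (Ici 0) 0) {t : ℝ} (ht : 0 ≤ t) :
    fderivWithin ℝ Q (Ici 0) (0, t) (1, 0) = 0 := by
  have hpos : EqOn (fun t => fderivWithin ℝ Q (Ici 0) (0, t) (1, 0)) 0 (Ioi 0) := by
    intro t (ht : 0 < t)
    refine fderivWithin_apply_eq_zero_of_hasDerivWithinAt
      (hQ.differentiableOn one_ne_zero _ ⟨le_rfl, ht.le⟩)
      (fun r hr => ⟨by simpa using hr, by simpa using ht.le⟩) ?_
    have hdiv : HasDerivWithinAt (fun r : ℝ => r / t) t⁻¹ (Ici 0) 0 := by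
      simpa using ((hasDerivAt_id (0 : ℝ)).div_const t).hasDerivWithinAt
    have hscaled : HasDerivWithinAt (fun r => t ^ q * Q (r / t, 1)) 0 (Ici 0) 0 := by
      simpa using
        (hQs.comp_of_eq (0 : ℝ) hdiv (fun r hr => div_nonneg hr ht.le) (by simp)).const_mul (t ^ q)
    refine hscaled.congr_of_mem (fun r (hr : 0 ≤ r) => ?_) self_mem_Ici
    simpa [mul_div_cancel₀ r ht.ne'] using hhom t ht (r / t) 1 (div_nonneg hr ht.le) zero_le_one
  -- the corner `t = 0` is reached by continuity of the derivative, not by homogeneity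
  have hcont : ContinuousOn (fun t => fderivWithin ℝ Q (Ici 0) (0, t) (1, 0)) (Ici 0) :=
    ((hQ.continuousOn_fderivWithin (uniqueDiffOn_Ici_prod 0) le_rfl).comp
      (Continuous.prodMk_right 0).continuousOn fun t ht => ⟨le_rfl, ht⟩).clm_apply
      continuousOn_const
  exact hpos.of_subset_closure hcont continuousOn_const Ioi_subset_Ici_self
    (by rw [closure_Ioi]) ht

theorem fderivWithin_Ici_apply_zero_one_eq_zero_of_homogeneous {Q : ℝ × ℝ → ℝ} {q : ℝ}
    (hQ : ContDiffOn ℝ 1 Q (Ici 0))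
    (hhom : ∀ θ : ℝ, 0 < θ → ∀ s t : ℝ, 0 ≤ s → 0 ≤ t → Q (θ * s, θ * t) = θ ^ q * Q (s, t))
    (hQt : HasDerivWithinAt (fun t : ℝ => Q (1, t)) 0 (Ici 0) 0) {s : ℝ} (hs : 0 ≤ s) :
    fderivWithin ℝ Q (Ici 0) (s, 0) (0, 1) = 0 := by
  let e := ContinuousLinearEquiv.prodComm ℝ ℝ ℝ
  have he : e ⁻¹' Ici 0 = Ici 0 := by ext; simp [e, Prod.le_def, and_comm]
  have hswap := fderivWithin_Ici_apply_one_zero_eq_zero_of_homogeneous (Q := Q ∘ e)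
    (by simpa [he] using hQ.comp_continuousLinearMap (e : ℝ × ℝ →L[ℝ] ℝ × ℝ))
    (fun θ hθ s t hs ht => hhom θ hθ t s ht hs) hQt hs
  rw [← he, e.comp_right_fderivWithin (he ▸ uniqueDiffOn_Ici_prod 0 _ ⟨le_rfl, hs⟩)] at hswap
  simpa [e] using hswap

theorem stmt_3_general (Q : ℝ × ℝ → ℝ) (q : ℝ)
    (hQreg : ContDiffOn ℝ 1 Q {z : ℝ × ℝ | 0 ≤ z.1 ∧ 0 ≤ z.2})
    (hhom : ∀ θ : ℝ, 0 < θ → ∀ s t : ℝ, 0 ≤ s → 0 ≤ t →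
      Q (θ * s, θ * t) = θ ^ q * Q (s, t))
    (hQs : HasDerivWithinAt (fun s : ℝ => Q (s, 1)) 0 (Ici 0) 0)
    (hQt : HasDerivWithinAt (fun t : ℝ => Q (1, t)) 0 (Ici 0) 0) :
    ContDiff ℝ 1 (fun z : ℝ × ℝ => Q (max z.1 0, max z.2 0)) := by
  change ContDiffOn ℝ 1 Q (Ici 0) at hQreg
  let g : ℝ × ℝ → ℝ × ℝ := fun z => (max z.1 0, max z.2 0)
  have hg : ∀ z, g z ∈ Ici 0 := fun z => ⟨le_max_right _ _, le_max_right _ _⟩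
  have hderiv (z : ℝ × ℝ) : HasFDerivAt (fun w => Q (g w)) (fderivWithin ℝ Q (Ici 0) (g z)) z := by
    refine (hQreg.differentiableOn one_ne_zero _ (hg z)).hasFDerivWithinAt
      |>.hasFDerivAt_comp_of_lipschitzWith
        ((LipschitzWith.prod_fst.max_const 0).prodMk (LipschitzWith.prod_snd.max_const 0)) hg
        (ContinuousLinearMap.hasFDerivAt_comp_posPart _ (fun hz => ?_) (fun hz => ?_))
    · simpa [g, max_eq_right hz] using fderivWithin_Ici_apply_one_zero_eq_zero_of_homogeneous
        hQreg hhom hQs (le_max_right z.2 0)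
    · simpa [g, max_eq_right hz] using fderivWithin_Ici_apply_zero_one_eq_zero_of_homogeneous
        hQreg hhom hQt (le_max_right z.1 0)
  rw [contDiff_one_iff_fderiv]
  refine ⟨fun z => (hderiv z).differentiableAt, ?_⟩
  rw [funext fun z => (hderiv z).fderiv]
  exact (hQreg.continuousOn_fderivWithin (uniqueDiffOn_Ici_prod 0) le_rfl).comp_continuous
    (by fun_prop) hg

/-- If `Q` is `C¹` on the closed first quadrant, `q`-homogeneous with `q ≥ 2`, and
`Q_s(0,1) = 0`, `Q_t(1,0) = 0`, then the extension `Q̃(s,t) := Q(s⁺,t⁺)` is `C¹`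
on all of `ℝ²`. -/
theorem stmt_3 (Q : ℝ × ℝ → ℝ) (q : ℝ) (hq : 2 ≤ q)
    (hQreg : ContDiffOn ℝ 1 Q {z : ℝ × ℝ | 0 ≤ z.1 ∧ 0 ≤ z.2})
    (hhom : ∀ θ : ℝ, 0 < θ → ∀ s t : ℝ, 0 ≤ s → 0 ≤ t →
      Q (θ * s, θ * t) = θ ^ q * Q (s, t))
    (hQs : HasDerivWithinAt (fun s : ℝ => Q (s, 1)) 0 (Ici 0) 0)
    (hQt : HasDerivWithinAt (fun t : ℝ => Q (1, t)) 0 (Ici 0) 0) :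
    ContDiff ℝ 1 (fun z : ℝ × ℝ => Q (max z.1 0, max z.2 0)) :=
  stmt_3_general Q q hQreg hhom hQs hQt
end

section
/- Let Q : ℝ₊² → ℝ be C¹ and q-homogeneous with q > 2. Then the extension Q̃(s,t) := Q(s⁺,t⁺) − ∇Q(s⁺,t⁺)·(s⁻,t⁻), where s⁻ = max(−s,0), is a C¹ function on ℝ², and moreover Q̃_s(s,t) ≥ 0 whenever s ≤ 0 and Q_s ≥ 0 on ℝ₊², and similarly Q̃_t(s,t) ≥ 0 whenever t ≤ 0 and Q_t ≥ 0 on ℝ₊². -/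
open Real Set Filter Topology

/-!
Differentiating `Q (θ • z) = θ ^ q * Q z` shows that `DQ` is `(q - 1)`-homogeneous and gives
Euler's relation `DQ(z) z = q Q(z)`. On each open quadrant `Q̃` is then explicit: `Q` on the first,
the affine map `Q 0 + DQ(0)` on the third, and `t^q Q(0,1) + s t^(q-1) Q_s(0,1)` (or its mirror
image) on the mixed ones. These four derivatives are restrictions of a single field that is
continuous on `ℝ²`, because its correction terms carry a factor `t^(q-2)`, which tends to `0` as
`q > 2`. A continuous function whose derivative off the axes extends continuously is `C¹`: the
mean value theorem gives the derivative on the closure of each quadrant. For `s ≤ 0` the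
`s`-derivative of `Q̃` is `Q_s(0, t⁺)`.
-/

section PosPart

variable {α β : Type*} [Lattice α] [AddGroup α] [Lattice β] [AddGroup β]

@[simp] lemma Prod.fst_posPart (z : α × β) : z⁺.1 = z.1⁺ := rfl

@[simp] lemma Prod.snd_posPart (z : α × β) : z⁺.2 = z.2⁺ := rfl

@[simp] lemma Prod.fst_negPart (z : α × β) : z⁻.1 = z.1⁻ := rfl

@[simp] lemma Prod.snd_negPart (z : α × β) : z⁻.2 = z.2⁻ := rfl

lemma continuous_posPart_prod : Continuous fun z : ℝ × ℝ => z⁺ :=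
  (continuous_posPart.comp continuous_fst).prodMk (continuous_posPart.comp continuous_snd)

lemma continuous_negPart_prod : Continuous fun z : ℝ × ℝ => z⁻ :=
  (continuous_negPart.comp continuous_fst).prodMk (continuous_negPart.comp continuous_snd)

end PosPart

section Homogeneous

variable {E : Type*} [NormedAddCommGroup E] [NormedSpace ℝ E]

def IsHomogeneousOn (Q : E → ℝ) (S : Set E) (q : ℝ) : Prop :=
  ∀ θ : ℝ, 0 < θ → ∀ z ∈ S, Q (θ • z) = θ ^ q * Q z

variable {Q : E → ℝ} {S : Set E} {q : ℝ}

lemma IsHomogeneousOn.fderivWithin_smul (hhom : IsHomogeneousOn Q S q) (hu : UniqueDiffOn ℝ S)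
    (hS : ∀ θ : ℝ, 0 < θ → ∀ z ∈ S, θ • z ∈ S) (hQ : DifferentiableOn ℝ Q S)
    {θ : ℝ} (hθ : 0 < θ) {z : E} (hz : z ∈ S) :
    fderivWithin ℝ Q S (θ • z) = θ ^ (q - 1) • fderivWithin ℝ Q S z := by
  have hcomp : HasFDerivWithinAt (fun w => Q (θ • w))
      ((fderivWithin ℝ Q S (θ • z)).comp (θ • ContinuousLinearMap.id ℝ E)) S z :=
    (hQ _ (hS θ hθ z hz)).hasFDerivWithinAt.comp z
      (θ • ContinuousLinearMap.id ℝ E).hasFDerivWithinAt (fun w hw => hS θ hθ w hw)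
  have hscale : HasFDerivWithinAt (fun w => Q (θ • w)) (θ ^ q • fderivWithin ℝ Q S z) S z :=
    ((hQ z hz).hasFDerivWithinAt.const_smul (θ ^ q)).congr (fun w hw => hhom θ hθ w hw)
      (hhom θ hθ z hz)
  ext u
  have hu' := congrArg (fun L : E →L[ℝ] ℝ => L u) ((hu z hz).eq hcomp hscale)
  simp only [ContinuousLinearMap.comp_apply, smul_apply,
    ContinuousLinearMap.id_apply, map_smul, smul_eq_mul] at hu'
  rw [smul_apply, smul_eq_mul, Real.rpow_sub_one hθ.ne']
  field_simp
  linarith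

lemma IsHomogeneousOn.fderivWithin_apply_self (hhom : IsHomogeneousOn Q S q)
    (hS : ∀ θ : ℝ, 0 < θ → ∀ z ∈ S, θ • z ∈ S) {z : E} (hz : z ∈ S)
    (hQ : DifferentiableWithinAt ℝ Q S z) :
    fderivWithin ℝ Q S z z = q * Q z := by
  have hQ' : HasFDerivWithinAt Q (fderivWithin ℝ Q S z) S ((1 : ℝ) • z) := by
    rw [one_smul]; exact hQ.hasFDerivWithinAt
  have hray : HasDerivAt (fun θ : ℝ => Q (θ • z)) (fderivWithin ℝ Q S z z) 1 :=
    (hQ'.comp_hasDerivWithinAt 1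
      (by simpa using ((hasDerivAt_id (1 : ℝ)).smul_const z).hasDerivWithinAt)
      (fun θ hθ => hS θ hθ z hz)).hasDerivAt (Ioi_mem_nhds one_pos)
  have hpow : HasDerivAt (fun θ : ℝ => θ ^ q * Q z) (q * Q z) 1 := by
    simpa using (Real.hasDerivAt_rpow_const (p := q) (Or.inl one_ne_zero)).mul_const (Q z)
  refine hray.unique (hpow.congr_of_eventuallyEq ?_)
  filter_upwards [Ioi_mem_nhds one_pos] with θ hθ using hhom θ hθ z hz

end Homogeneous

section Gluing

variable {F : Type*} [NormedAddCommGroup F] [NormedSpace ℝ F]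

lemma hasFDerivWithinAt_closure_prod {f : ℝ × ℝ → F} {f' : ℝ × ℝ → ℝ × ℝ →L[ℝ] F}
    (hf : Continuous f) (hf' : Continuous f') {I J : Set ℝ} (hI : IsOpen I) (hIc : Convex ℝ I)
    (hJ : IsOpen J) (hJc : Convex ℝ J) (hd : ∀ z ∈ I ×ˢ J, HasFDerivAt f (f' z) z) (z : ℝ × ℝ) :
    HasFDerivWithinAt f (f' z) (closure I ×ˢ closure J) z := by
  rw [← closure_prod_eq]
  refine hasFDerivWithinAt_closure_of_tendsto_fderiv
    (fun w hw => (hd w hw).differentiableAt.differentiableWithinAt) (hIc.prod hJc) (hI.prod hJ)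
    (fun w _ => hf.continuousWithinAt) ?_
  refine (hf'.tendsto z).mono_left nhdsWithin_le_nhds |>.congr' ?_
  filter_upwards [self_mem_nhdsWithin] with w hw using ((hd w hw).fderiv).symm

lemma hasFDerivAt_of_hasFDerivAt_off_axes {f : ℝ × ℝ → F} {f' : ℝ × ℝ → ℝ × ℝ →L[ℝ] F}
    (hf : Continuous f) (hf' : Continuous f')
    (hd : ∀ z : ℝ × ℝ, z.1 ≠ 0 → z.2 ≠ 0 → HasFDerivAt f (f' z) z) (z : ℝ × ℝ) :
    HasFDerivAt f (f' z) z := by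
  have hpp := hasFDerivWithinAt_closure_prod hf hf' isOpen_Ioi (convex_Ioi 0) isOpen_Ioi
    (convex_Ioi 0) (fun w hw => hd w hw.1.ne' hw.2.ne') z
  have hpn := hasFDerivWithinAt_closure_prod hf hf' isOpen_Ioi (convex_Ioi 0) isOpen_Iio
    (convex_Iio 0) (fun w hw => hd w hw.1.ne' hw.2.ne) z
  have hnp := hasFDerivWithinAt_closure_prod hf hf' isOpen_Iio (convex_Iio 0) isOpen_Ioi
    (convex_Ioi 0) (fun w hw => hd w hw.1.ne hw.2.ne') z
  have hnn := hasFDerivWithinAt_closure_prod hf hf' isOpen_Iio (convex_Iio 0) isOpen_Iio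
    (convex_Iio 0) (fun w hw => hd w hw.1.ne hw.2.ne) z
  have h := (hpp.union hpn).union (hnp.union hnn)
  rwa [← prod_union, ← prod_union, ← union_prod, closure_Ioi, closure_Iio, Ici_union_Iic,
    univ_prod_univ, hasFDerivWithinAt_univ] at h

end Gluing

noncomputable section Extension

variable {Q : ℝ × ℝ → ℝ} {q : ℝ}

lemma uniqueDiffOn_Ici_zero : UniqueDiffOn ℝ (Ici (0 : ℝ × ℝ)) := by
  rw [Ici_prod_eq]
  exact (uniqueDiffOn_Ici 0).prod (uniqueDiffOn_Ici 0)

lemma smul_mem_Ici_zero : ∀ θ : ℝ, 0 < θ → ∀ z ∈ Ici (0 : ℝ × ℝ), θ • z ∈ Ici 0 :=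
  fun _ hθ _ hz => mem_Ici.mpr (smul_nonneg hθ.le hz)

def quadrantExtension (Q : ℝ × ℝ → ℝ) (z : ℝ × ℝ) : ℝ :=
  Q z⁺ - fderivWithin ℝ Q (Ici 0) z⁺ z⁻

/-- The correction terms are `D²Q(z⁺)(·, z⁻)`: `z⁻` has a nonzero first coordinate only when `z⁺`
lies on the `t`-axis, where `DQ(0, t) = t ^ (q - 1) • DQ(0, 1)` can be differentiated in `t`. -/
def quadrantExtensionDeriv (Q : ℝ × ℝ → ℝ) (q : ℝ) (z : ℝ × ℝ) : ℝ × ℝ →L[ℝ] ℝ :=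
  fderivWithin ℝ Q (Ici 0) z⁺
    - ((q - 1) * fderivWithin ℝ Q (Ici 0) (0, 1) (1, 0) * z.1⁻ * z.2⁺ ^ (q - 2)) •
      ContinuousLinearMap.snd ℝ ℝ ℝ
    - ((q - 1) * fderivWithin ℝ Q (Ici 0) (1, 0) (0, 1) * z.2⁻ * z.1⁺ ^ (q - 2)) •
      ContinuousLinearMap.fst ℝ ℝ ℝ

lemma continuous_fderivWithin_posPart (hQ : ContDiffOn ℝ 1 Q (Ici 0)) :
    Continuous fun z : ℝ × ℝ => fderivWithin ℝ Q (Ici 0) z⁺ :=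
  (hQ.continuousOn_fderivWithin uniqueDiffOn_Ici_zero le_rfl).comp_continuous
    continuous_posPart_prod posPart_nonneg

lemma continuous_quadrantExtension (hQ : ContDiffOn ℝ 1 Q (Ici 0)) :
    Continuous (quadrantExtension Q) :=
  (hQ.continuousOn.comp_continuous continuous_posPart_prod posPart_nonneg).sub
    ((continuous_fderivWithin_posPart hQ).clm_apply continuous_negPart_prod)

lemma continuous_quadrantExtensionDeriv (hq : 2 ≤ q) (hQ : ContDiffOn ℝ 1 Q (Ici 0)) :
    Continuous (quadrantExtensionDeriv Q q) := by
  have hpow : Continuous fun x : ℝ => x ^ (q - 2) := Real.continuous_rpow_const (by linarith)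
  have hD := continuous_fderivWithin_posPart hQ
  unfold quadrantExtensionDeriv
  fun_prop

lemma quadrantExtension_of_nonneg {z : ℝ × ℝ} (hz : 0 ≤ z) : quadrantExtension Q z = Q z := by
  simp [quadrantExtension, posPart_eq_self.mpr hz, negPart_eq_zero.mpr hz]

lemma quadrantExtensionDeriv_of_nonneg {z : ℝ × ℝ} (hz : 0 ≤ z) :
    quadrantExtensionDeriv Q q z = fderivWithin ℝ Q (Ici 0) z := by
  simp [quadrantExtensionDeriv, posPart_eq_self.mpr hz, negPart_eq_zero.mpr hz.1,
    negPart_eq_zero.mpr hz.2]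

lemma quadrantExtension_of_nonpos {z : ℝ × ℝ} (hz : z ≤ 0) :
    quadrantExtension Q z = Q 0 + fderivWithin ℝ Q (Ici 0) 0 z := by
  simp [quadrantExtension, posPart_eq_zero.mpr hz, negPart_eq_neg.mpr hz]

lemma quadrantExtensionDeriv_of_nonpos (hq : q ≠ 2) {z : ℝ × ℝ} (hz : z ≤ 0) :
    quadrantExtensionDeriv Q q z = fderivWithin ℝ Q (Ici 0) 0 := by
  simp [quadrantExtensionDeriv, posPart_eq_zero.mpr hz, posPart_eq_zero.mpr hz.1,
    posPart_eq_zero.mpr hz.2, Real.zero_rpow (sub_ne_zero.mpr hq)]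

lemma fderivWithin_zero_mk (hhom : IsHomogeneousOn Q (Ici 0) q)
    (hQ : DifferentiableOn ℝ Q (Ici 0)) {t : ℝ} (ht : 0 < t) :
    fderivWithin ℝ Q (Ici 0) (0, t) = t ^ (q - 1) • fderivWithin ℝ Q (Ici 0) (0, 1) := by
  simpa using hhom.fderivWithin_smul uniqueDiffOn_Ici_zero smul_mem_Ici_zero hQ ht
    (z := ((0 : ℝ), (1 : ℝ))) ⟨le_rfl, zero_le_one⟩

lemma fderivWithin_mk_zero (hhom : IsHomogeneousOn Q (Ici 0) q)
    (hQ : DifferentiableOn ℝ Q (Ici 0)) {s : ℝ} (hs : 0 < s) :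
    fderivWithin ℝ Q (Ici 0) (s, 0) = s ^ (q - 1) • fderivWithin ℝ Q (Ici 0) (1, 0) := by
  simpa using hhom.fderivWithin_smul uniqueDiffOn_Ici_zero smul_mem_Ici_zero hQ hs
    (z := ((1 : ℝ), (0 : ℝ))) ⟨zero_le_one, le_rfl⟩

lemma quadrantExtension_of_nonpos_of_pos (hhom : IsHomogeneousOn Q (Ici 0) q)
    (hQ : DifferentiableOn ℝ Q (Ici 0)) {z : ℝ × ℝ} (h1 : z.1 ≤ 0) (h2 : 0 < z.2) :
    quadrantExtension Q z =
      z.2 ^ q * Q (0, 1) + z.1 * z.2 ^ (q - 1) * fderivWithin ℝ Q (Ici 0) (0, 1) (1, 0) := by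
  have hpos : z⁺ = (0, z.2) := by ext <;> simp [posPart_eq_zero.mpr h1, h2.le]
  have hneg : z⁻ = (-z.1) • ((1 : ℝ), (0 : ℝ)) := by
    ext <;> simp [negPart_eq_neg.mpr h1, negPart_eq_zero.mpr h2.le]
  have hQ0t : Q (0, z.2) = z.2 ^ q * Q (0, 1) := by
    simpa using hhom z.2 h2 ((0 : ℝ), (1 : ℝ)) ⟨le_rfl, zero_le_one⟩
  rw [quadrantExtension, hpos, hneg, hQ0t, fderivWithin_zero_mk hhom hQ h2]
  simp only [smul_apply, map_smul, smul_eq_mul]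
  ring

lemma hasFDerivAt_quadrantExtension_of_neg_of_pos (hhom : IsHomogeneousOn Q (Ici 0) q)
    (hQ : DifferentiableOn ℝ Q (Ici 0)) {z : ℝ × ℝ} (h1 : z.1 < 0) (h2 : 0 < z.2) :
    HasFDerivAt (quadrantExtension Q) (quadrantExtensionDeriv Q q z) z := by
  set a := fderivWithin ℝ Q (Ici 0) (0, 1) (1, 0)
  have hpow (p : ℝ) : HasFDerivAt (fun w : ℝ × ℝ => w.2 ^ p)
      ((p * z.2 ^ (p - 1)) • ContinuousLinearMap.snd ℝ ℝ ℝ) z :=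
    (Real.hasDerivAt_rpow_const (Or.inl h2.ne')).comp_hasFDerivAt z hasFDerivAt_snd
  have hg := ((hpow q).mul_const (Q (0, 1))).add
    ((hasFDerivAt_fst.mul (hpow (q - 1))).mul_const a)
  have hEuler : fderivWithin ℝ Q (Ici 0) (0, 1) (0, 1) = q * Q (0, 1) :=
    hhom.fderivWithin_apply_self smul_mem_Ici_zero ⟨le_rfl, zero_le_one⟩
      (hQ _ ⟨le_rfl, zero_le_one⟩)
  have hpos : z⁺ = (0, z.2) := by ext <;> simp [posPart_eq_zero.mpr h1.le, h2.le]
  refine (hg.congr_of_eventuallyEq ?_).congr_fderiv ?_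
  · filter_upwards [(isOpen_Iio.prod isOpen_Ioi).mem_nhds ⟨h1, h2⟩] with w hw
    exact quadrantExtension_of_nonpos_of_pos hhom hQ hw.1.le hw.2
  · ext <;>
    simp only [ContinuousLinearMap.comp_apply, ContinuousLinearMap.inl_apply,
      ContinuousLinearMap.inr_apply, quadrantExtensionDeriv, hpos, fderivWithin_zero_mk hhom hQ h2,
      hEuler, sub_apply, add_apply, smul_apply, ContinuousLinearMap.coe_fst',
      ContinuousLinearMap.coe_snd', smul_eq_mul, negPart_eq_neg.mpr h1.le,
      posPart_eq_self.mpr h2.le, negPart_eq_zero.mpr h2.le, sub_sub, one_add_one_eq_two] <;> ring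

lemma quadrantExtension_of_pos_of_nonpos (hhom : IsHomogeneousOn Q (Ici 0) q)
    (hQ : DifferentiableOn ℝ Q (Ici 0)) {z : ℝ × ℝ} (h1 : 0 < z.1) (h2 : z.2 ≤ 0) :
    quadrantExtension Q z =
      z.1 ^ q * Q (1, 0) + z.2 * z.1 ^ (q - 1) * fderivWithin ℝ Q (Ici 0) (1, 0) (0, 1) := by
  have hpos : z⁺ = (z.1, 0) := by ext <;> simp [posPart_eq_zero.mpr h2, h1.le]
  have hneg : z⁻ = (-z.2) • ((0 : ℝ), (1 : ℝ)) := by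
    ext <;> simp [negPart_eq_neg.mpr h2, negPart_eq_zero.mpr h1.le]
  have hQs0 : Q (z.1, 0) = z.1 ^ q * Q (1, 0) := by
    simpa using hhom z.1 h1 ((1 : ℝ), (0 : ℝ)) ⟨zero_le_one, le_rfl⟩
  rw [quadrantExtension, hpos, hneg, hQs0, fderivWithin_mk_zero hhom hQ h1]
  simp only [smul_apply, map_smul, smul_eq_mul]
  ring

lemma hasFDerivAt_quadrantExtension_of_pos_of_neg (hhom : IsHomogeneousOn Q (Ici 0) q)
    (hQ : DifferentiableOn ℝ Q (Ici 0)) {z : ℝ × ℝ} (h1 : 0 < z.1) (h2 : z.2 < 0) :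
    HasFDerivAt (quadrantExtension Q) (quadrantExtensionDeriv Q q z) z := by
  set b := fderivWithin ℝ Q (Ici 0) (1, 0) (0, 1)
  have hpow (p : ℝ) : HasFDerivAt (fun w : ℝ × ℝ => w.1 ^ p)
      ((p * z.1 ^ (p - 1)) • ContinuousLinearMap.fst ℝ ℝ ℝ) z :=
    (Real.hasDerivAt_rpow_const (Or.inl h1.ne')).comp_hasFDerivAt z hasFDerivAt_fst
  have hg := ((hpow q).mul_const (Q (1, 0))).add
    ((hasFDerivAt_snd.mul (hpow (q - 1))).mul_const b)
  have hEuler : fderivWithin ℝ Q (Ici 0) (1, 0) (1, 0) = q * Q (1, 0) :=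
    hhom.fderivWithin_apply_self smul_mem_Ici_zero ⟨zero_le_one, le_rfl⟩
      (hQ _ ⟨zero_le_one, le_rfl⟩)
  have hpos : z⁺ = (z.1, 0) := by ext <;> simp [posPart_eq_zero.mpr h2.le, h1.le]
  refine (hg.congr_of_eventuallyEq ?_).congr_fderiv ?_
  · filter_upwards [(isOpen_Ioi.prod isOpen_Iio).mem_nhds ⟨h1, h2⟩] with w hw
    exact quadrantExtension_of_pos_of_nonpos hhom hQ hw.1 hw.2.le
  · ext <;>
    simp only [ContinuousLinearMap.comp_apply, ContinuousLinearMap.inl_apply,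
      ContinuousLinearMap.inr_apply, quadrantExtensionDeriv, hpos, fderivWithin_mk_zero hhom hQ h1,
      hEuler, sub_apply, add_apply, smul_apply, ContinuousLinearMap.coe_fst',
      ContinuousLinearMap.coe_snd', smul_eq_mul, negPart_eq_neg.mpr h2.le,
      posPart_eq_self.mpr h1.le, negPart_eq_zero.mpr h1.le, sub_sub, one_add_one_eq_two] <;> ring

lemma hasFDerivAt_quadrantExtension_of_pos_of_pos (hQ : DifferentiableOn ℝ Q (Ici 0))
    {z : ℝ × ℝ} (h1 : 0 < z.1) (h2 : 0 < z.2) :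
    HasFDerivAt (quadrantExtension Q) (quadrantExtensionDeriv Q q z) z := by
  have hU : Ioi 0 ×ˢ Ioi 0 ∈ 𝓝 z := (isOpen_Ioi.prod isOpen_Ioi).mem_nhds ⟨h1, h2⟩
  have hz : 0 ≤ z := ⟨h1.le, h2.le⟩
  rw [quadrantExtensionDeriv_of_nonneg hz]
  refine ((hQ z hz).hasFDerivWithinAt.hasFDerivAt
    (mem_of_superset hU fun w hw => ⟨hw.1.le, hw.2.le⟩)).congr_of_eventuallyEq ?_
  filter_upwards [hU] with w hw using quadrantExtension_of_nonneg ⟨hw.1.le, hw.2.le⟩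

lemma hasFDerivAt_quadrantExtension_of_neg_of_neg (hq : q ≠ 2) {z : ℝ × ℝ} (h1 : z.1 < 0)
    (h2 : z.2 < 0) : HasFDerivAt (quadrantExtension Q) (quadrantExtensionDeriv Q q z) z := by
  rw [quadrantExtensionDeriv_of_nonpos hq ⟨h1.le, h2.le⟩]
  refine ((fderivWithin ℝ Q (Ici 0) 0).hasFDerivAt.const_add (Q 0)).congr_of_eventuallyEq ?_
  filter_upwards [(isOpen_Iio.prod isOpen_Iio).mem_nhds ⟨h1, h2⟩] with w hw
  exact quadrantExtension_of_nonpos ⟨hw.1.le, hw.2.le⟩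

theorem hasFDerivAt_quadrantExtension (hq : 2 < q) (hQ : ContDiffOn ℝ 1 Q (Ici 0))
    (hhom : IsHomogeneousOn Q (Ici 0) q) (z : ℝ × ℝ) :
    HasFDerivAt (quadrantExtension Q) (quadrantExtensionDeriv Q q z) z := by
  have hQd := hQ.differentiableOn one_ne_zero
  refine hasFDerivAt_of_hasFDerivAt_off_axes (continuous_quadrantExtension hQ)
    (continuous_quadrantExtensionDeriv hq.le hQ) (fun w h1 h2 => ?_) z
  rcases h1.lt_or_gt with h1 | h1 <;> rcases h2.lt_or_gt with h2 | h2
  · exact hasFDerivAt_quadrantExtension_of_neg_of_neg hq.ne' h1 h2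
  · exact hasFDerivAt_quadrantExtension_of_neg_of_pos hhom hQd h1 h2
  · exact hasFDerivAt_quadrantExtension_of_pos_of_neg hhom hQd h1 h2
  · exact hasFDerivAt_quadrantExtension_of_pos_of_pos hQd h1 h2

theorem contDiff_quadrantExtension (hq : 2 < q) (hQ : ContDiffOn ℝ 1 Q (Ici 0))
    (hhom : IsHomogeneousOn Q (Ici 0) q) : ContDiff ℝ 1 (quadrantExtension Q) := by
  have hD := hasFDerivAt_quadrantExtension hq hQ hhom
  refine contDiff_one_iff_fderiv.mpr ⟨fun z => (hD z).differentiableAt, ?_⟩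
  simpa only [funext fun z => (hD z).fderiv] using continuous_quadrantExtensionDeriv hq.le hQ

lemma quadrantExtensionDeriv_apply_fst_of_nonpos (hq : q ≠ 2) {z : ℝ × ℝ} (h : z.1 ≤ 0) :
    quadrantExtensionDeriv Q q z (1, 0) = fderivWithin ℝ Q (Ici 0) z⁺ (1, 0) := by
  simp [quadrantExtensionDeriv, posPart_eq_zero.mpr h, Real.zero_rpow (sub_ne_zero.mpr hq)]

lemma quadrantExtensionDeriv_apply_snd_of_nonpos (hq : q ≠ 2) {z : ℝ × ℝ} (h : z.2 ≤ 0) :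
    quadrantExtensionDeriv Q q z (0, 1) = fderivWithin ℝ Q (Ici 0) z⁺ (0, 1) := by
  simp [quadrantExtensionDeriv, posPart_eq_zero.mpr h, Real.zero_rpow (sub_ne_zero.mpr hq)]

end Extension

/-- Let `Q` be `C¹` on the closed first quadrant and `q`-homogeneous with `q > 2`. Then
the extension `Q̃(s,t) := Q(s⁺,t⁺) − ∇Q(s⁺,t⁺)·(s⁻,t⁻)` is `C¹` on `ℝ²`; moreover, if
`Q_s ≥ 0` on the quadrant then `Q̃_s(s,t) ≥ 0` whenever `s ≤ 0`, and if `Q_t ≥ 0` on the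
quadrant then `Q̃_t(s,t) ≥ 0` whenever `t ≤ 0`. -/
theorem stmt_4 (Q : ℝ × ℝ → ℝ) (q : ℝ) (hq : 2 < q)
    (S : Set (ℝ × ℝ)) (hS : S = {z : ℝ × ℝ | 0 ≤ z.1 ∧ 0 ≤ z.2})
    (hQreg : ContDiffOn ℝ 1 Q S)
    (hhom : ∀ θ : ℝ, 0 < θ → ∀ s t : ℝ, 0 ≤ s → 0 ≤ t →
      Q (θ * s, θ * t) = θ ^ q * Q (s, t))
    (Qext : ℝ × ℝ → ℝ)
    (hQext : Qext = fun z : ℝ × ℝ =>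
      Q (max z.1 0, max z.2 0)
        - fderivWithin ℝ Q S (max z.1 0, max z.2 0) (max (-z.1) 0, max (-z.2) 0)) :
    ContDiff ℝ 1 Qext
    ∧ ((∀ z ∈ S, 0 ≤ fderivWithin ℝ Q S z (1, 0)) →
        ∀ s t : ℝ, s ≤ 0 → 0 ≤ deriv (fun x : ℝ => Qext (x, t)) s)
    ∧ ((∀ z ∈ S, 0 ≤ fderivWithin ℝ Q S z (0, 1)) →
        ∀ s t : ℝ, t ≤ 0 → 0 ≤ deriv (fun y : ℝ => Qext (s, y)) t) := by
  obtain rfl : S = Ici 0 := hS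
  obtain rfl : Qext = quadrantExtension Q := hQext
  have hhom' : IsHomogeneousOn Q (Ici 0) q := fun θ hθ z hz => hhom θ hθ z.1 z.2 hz.1 hz.2
  have hD := hasFDerivAt_quadrantExtension hq hQreg hhom'
  refine ⟨contDiff_quadrantExtension hq hQreg hhom', fun hmono s t hs => ?_,
    fun hmono s t ht => ?_⟩
  · have h : HasDerivAt (fun x => quadrantExtension Q (x, t))
        (quadrantExtensionDeriv Q q (s, t) (1, 0)) s :=
      (hD (s, t)).comp_hasDerivAt (f := fun x => (x, t)) s
        ((hasDerivAt_id' s).prodMk (hasDerivAt_const s t))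
    rw [h.deriv, quadrantExtensionDeriv_apply_fst_of_nonpos hq.ne' hs]
    exact hmono _ (posPart_nonneg (s, t))
  · have h : HasDerivAt (fun y => quadrantExtension Q (s, y))
        (quadrantExtensionDeriv Q q (s, t) (0, 1)) t :=
      (hD (s, t)).comp_hasDerivAt t ((hasDerivAt_const t s).prodMk (hasDerivAt_id t))
    rw [h.deriv, quadrantExtensionDeriv_apply_snd_of_nonpos hq.ne' ht]
    exact hmono _ (posPart_nonneg (s, t))
end

section
/- Under the setting of the functional I on the Nehari manifold N, for every z ∈ X with z ≠ 0 and ∫H(z) > 0 there exists a unique t_z > 0 such that t_z·z ∈ N, and the function t ↦ I(tz), t ≥ 0, attains its maximum exactly at t = t_z. -/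
/-!
Writing `I(tz) = t²/2 · a − t^q Q − t^p/p · H` with `a, H > 0`, `Q ≥ 0` and `2 < q < p`, the
derivative in `t` is `t · ψ(t)` with `ψ(t) = a − q t^(q−2) Q − t^(p−2) H`. The function `ψ` is
strictly decreasing on `[0, ∞)`, positive at `0` and eventually negative, so it has exactly one
positive zero `t_z`; the fibering map increases strictly before `t_z` and decreases strictly after
it, and `t² ψ(t)` is exactly the Nehari functional `I'(tz)(tz)`.
-/

open Real Set

theorem lt_of_hasDerivAt_pos_of_neg {f f' : ℝ → ℝ} {b c : ℝ} (hbc : b < c)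
    (hf : ContinuousOn f (Ici b)) (hderiv : ∀ t, b < t → HasDerivAt f (f' t) t)
    (hpos : ∀ t ∈ Ioo b c, 0 < f' t) (hneg : ∀ t, c < t → f' t < 0) :
    ∀ t ∈ Ici b, t ≠ c → f t < f c := by
  have hmono : StrictMonoOn f (Icc b c) := by
    refine strictMonoOn_of_deriv_pos (convex_Icc b c) (hf.mono Icc_subset_Ici_self) ?_
    intro t ht
    rw [interior_Icc] at ht
    rw [(hderiv t ht.1).deriv]
    exact hpos t ht
  have hanti : StrictAntiOn f (Ici c) := by
    refine strictAntiOn_of_deriv_neg (convex_Ici c) (hf.mono (Ici_subset_Ici.2 hbc.le)) ?_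
    intro t ht
    rw [interior_Ici] at ht
    rw [(hderiv t (hbc.trans ht)).deriv]
    exact hneg t ht
  intro t ht hne
  rcases hne.lt_or_gt with hlt | hgt
  · exact hmono ⟨ht, hlt.le⟩ ⟨hbc.le, le_rfl⟩ hlt
  · exact hanti self_mem_Ici hgt.le hgt

namespace Nehari

variable (q p a Qz Hz : ℝ)

noncomputable def fibering (t : ℝ) : ℝ := t ^ 2 / 2 * a - t ^ q * Qz - t ^ p / p * Hz

noncomputable def ratio (t : ℝ) : ℝ := a - q * t ^ (q - 2) * Qz - t ^ (p - 2) * Hz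

variable {q p a Qz Hz}

lemma continuous_fibering (hq : 0 ≤ q) (hp : 0 ≤ p) : Continuous (fibering q p a Qz Hz) := by
  unfold fibering
  fun_prop (disch := assumption)

lemma continuous_ratio (hq : 2 < q) (hp : 2 < p) : Continuous (ratio q p a Qz Hz) := by
  unfold ratio
  fun_prop (disch := linarith)

lemma ratio_zero (hq : 2 < q) (hp : 2 < p) : ratio q p a Qz Hz 0 = a := by
  simp [ratio, zero_rpow (by linarith : q - 2 ≠ 0), zero_rpow (by linarith : p - 2 ≠ 0)]

lemma strictAntiOn_ratio (hq : 2 < q) (hp : 2 < p) (hQz : 0 ≤ Qz) (hHz : 0 < Hz) :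
    StrictAntiOn (ratio q p a Qz Hz) (Ici 0) := by
  intro x hx y _ hxy
  have hQ : q * x ^ (q - 2) * Qz ≤ q * y ^ (q - 2) * Qz := by
    gcongr
  have hH : x ^ (p - 2) * Hz < y ^ (p - 2) * Hz := by
    gcongr
  simp only [ratio]
  linarith

lemma exists_pos_ratio_eq_zero (hq : 2 < q) (hp : 2 < p) (ha : 0 < a) (hQz : 0 ≤ Qz)
    (hHz : 0 < Hz) : ∃ t, 0 < t ∧ ratio q p a Qz Hz t = 0 := by
  set T := (a / Hz + 1) ^ (p - 2)⁻¹
  have hbase : 0 ≤ a / Hz + 1 := by positivity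
  have hT : 0 < T := rpow_pos_of_pos (by positivity) _
  have hratioT : ratio q p a Qz Hz T < 0 := by
    have hTpow : T ^ (p - 2) = a / Hz + 1 := rpow_inv_rpow hbase (by linarith)
    have hQ : 0 ≤ q * T ^ (q - 2) * Qz := by
      have := rpow_nonneg hT.le (q - 2)
      have : 0 ≤ q := by linarith
      positivity
    have hH : a < (a / Hz + 1) * Hz := by
      rw [add_mul, div_mul_cancel₀ _ hHz.ne']
      linarith
    simp only [ratio, hTpow]
    linarith
  obtain ⟨t, ht, hroot⟩ : ∃ t ∈ Icc 0 T, ratio q p a Qz Hz t = 0 :=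
    intermediate_value_Icc' hT.le (continuous_ratio hq hp).continuousOn
      ⟨hratioT.le, (ratio_zero hq hp).symm ▸ ha.le⟩
  refine ⟨t, ht.1.lt_of_ne ?_, hroot⟩
  rintro rfl
  rw [ratio_zero hq hp] at hroot
  exact ha.ne' hroot

lemma hasDerivAt_fibering (hp : 2 < p) {t : ℝ} (ht : 0 < t) :
    HasDerivAt (fibering q p a Qz Hz) (t * ratio q p a Qz Hz t) t := by
  have hsq : HasDerivAt (fun t : ℝ => t ^ 2 / 2 * a) (t * a) t := by
    simpa using ((hasDerivAt_pow 2 t).div_const 2).mul_const a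
  have hQ := (hasDerivAt_rpow_const (p := q) (Or.inl ht.ne')).mul_const Qz
  have hH := ((hasDerivAt_rpow_const (p := p) (Or.inl ht.ne')).div_const p).mul_const Hz
  refine ((hsq.sub hQ).sub hH).congr_deriv ?_
  have hp0 : p ≠ 0 := by linarith
  rw [ratio, show q - 1 = 1 + (q - 2) by ring, show p - 1 = 1 + (p - 2) by ring,
    rpow_add ht, rpow_add ht, rpow_one]
  field_simp

lemma nehari_eq_sq_mul_ratio {t : ℝ} (ht : 0 < t) :
    t ^ 2 * a - q * t ^ q * Qz - t ^ p * Hz = t ^ 2 * ratio q p a Qz Hz t := by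
  have hsplit (r : ℝ) : t ^ r = t ^ 2 * t ^ (r - 2) := by
    rw [← rpow_two, ← rpow_add ht, add_sub_cancel]
  rw [ratio, hsplit q, hsplit p]
  ring

end Nehari

theorem stmt_8_general (ts q : ℝ)
    (hq : 2 < q) (hqts : q < ts)
    (a Qz Hz : ℝ) (ha : 0 < a) (hQz : 0 ≤ Qz) (hHz : 0 < Hz) :
    ∃! tz : ℝ, 0 < tz ∧
      tz ^ 2 * a - q * tz ^ q * Qz - tz ^ ts * Hz = 0 ∧
      IsMaxOn (fun t : ℝ => t ^ 2 / 2 * a - t ^ q * Qz - t ^ ts / ts * Hz) (Ici 0) tz ∧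
      (∀ t ∈ Ici (0 : ℝ), t ≠ tz →
        t ^ 2 / 2 * a - t ^ q * Qz - t ^ ts / ts * Hz
          < tz ^ 2 / 2 * a - tz ^ q * Qz - tz ^ ts / ts * Hz) := by
  have hp : 2 < ts := hq.trans hqts
  obtain ⟨tz, htz0, hroot⟩ := Nehari.exists_pos_ratio_eq_zero hq hp ha hQz hHz
  have hanti := Nehari.strictAntiOn_ratio (a := a) hq hp hQz hHz
  have hmax : ∀ t ∈ Ici (0 : ℝ), t ≠ tz →
      Nehari.fibering q ts a Qz Hz t < Nehari.fibering q ts a Qz Hz tz :=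
    lt_of_hasDerivAt_pos_of_neg htz0
      (Nehari.continuous_fibering (by linarith) (by linarith)).continuousOn
      (fun t ht => Nehari.hasDerivAt_fibering hp ht)
      (fun t ht => mul_pos ht.1 (hroot ▸ hanti ht.1.le htz0.le ht.2))
      (fun t ht => mul_neg_of_pos_of_neg (htz0.trans ht)
        (hroot ▸ hanti htz0.le (htz0.trans ht).le ht))
  refine ⟨tz, ⟨htz0, ?_, isMaxOn_iff.2 fun t ht => ?_, hmax⟩, ?_⟩
  · rw [Nehari.nehari_eq_sq_mul_ratio htz0, hroot, mul_zero]
  · rcases eq_or_ne t tz with rfl | hne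
    · exact le_rfl
    · exact (hmax t ht hne).le
  · rintro s ⟨hs0, -, -, hsmax⟩
    by_contra hne
    exact lt_asymm (hmax s hs0.le hne) (hsmax tz htz0.le (Ne.symm hne))

/-- Fibering map property on the Nehari manifold: writing `a = ‖z‖² > 0`,
`Qz = ∫Q(z) ≥ 0`, `Hz = ∫H(z) > 0` and `I(tz) = (t²/2)a − t^q Qz − (t^{2*}/2*)Hz`,
there is a unique `t_z > 0` with `t_z z` on the Nehari manifold (i.e.
`t_z² a − q t_z^q Qz − t_z^{2*} Hz = 0`), and `t ↦ I(tz)` on `[0,∞)` attains its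
maximum exactly at `t = t_z`. -/
theorem stmt_8 (N : ℕ) (hN : 3 ≤ N) (ts q : ℝ) (hts : ts = 2 * N / ((N : ℝ) - 2))
    (hq : 2 < q) (hqts : q < ts)
    (a Qz Hz : ℝ) (ha : 0 < a) (hQz : 0 ≤ Qz) (hHz : 0 < Hz) :
    ∃! tz : ℝ, 0 < tz ∧
      tz ^ 2 * a - q * tz ^ q * Qz - tz ^ ts * Hz = 0 ∧
      IsMaxOn (fun t : ℝ => t ^ 2 / 2 * a - t ^ q * Qz - t ^ ts / ts * Hz) (Ici 0) tz ∧
      (∀ t ∈ Ici (0 : ℝ), t ≠ tz →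
        t ^ 2 / 2 * a - t ^ q * Qz - t ^ ts / ts * Hz
          < tz ^ 2 / 2 * a - tz ^ q * Qz - tz ^ ts / ts * Hz) :=
  stmt_8_general ts q hq hqts a Qz Hz ha hQz hHz
end

section
/- Brezis–Nirenberg type energy estimate: if ‖w_ε‖² = S + O(ε^{(N−2)/2}) and ε^{(2−N)/2}‖w_ε‖_q^q → ∞ as ε → 0⁺, then for all sufficiently small ε, (1/N)((A²+B²)/H(A,B)^{2/2*} · ‖w_ε‖²)^{N/2} − c₂‖w_ε‖_q^q < (1/N)S_H^{N/2}, where S_H = (A²+B²)S/H(A,B)^{2/2*} and c₂ > 0. -/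
open Real Filter Topology Set

/-!
With `k = (A² + B²) / H(A,B)^{2/2*}` and `p = N/2 ≥ 1`, convexity of `x ↦ x^p` (its slope on
`[kS, kS + kC]` is at most `p (kS + kC)^{p-1}`) gives `(k‖w_ε‖²)^p ≤ (kS)^p + M ε^{(N-2)/2}`.
The blow-up of `ε^{(2-N)/2}‖w_ε‖_q^q` makes `N c₂ ‖w_ε‖_q^q` eventually exceed `M ε^{(N-2)/2}`,
which absorbs the error term.
-/

lemma Real.rpow_sub_rpow_le_mul_sub {x y p : ℝ} (hx : 0 ≤ x) (hxy : x ≤ y) (hp : 1 ≤ p) :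
    y ^ p - x ^ p ≤ p * y ^ (p - 1) * (y - x) := by
  rcases hxy.eq_or_lt with rfl | hlt
  · simp
  have hslope := (convexOn_rpow hp).slope_le_of_hasDerivAt (x := x) (y := y) hx
    (hx.trans hlt.le) hlt (Real.hasDerivAt_rpow_const (Or.inr hp))
  rwa [slope_def_field, div_le_iff₀ (sub_pos.mpr hlt)] at hslope

lemma exists_eventually_rpow_le_rpow_add {u : ℝ → ℝ} {S C α p : ℝ} (hS : 0 ≤ S) (hC : 0 ≤ C)
    (hα : 0 ≤ α) (hp : 1 ≤ p) (hu₀ : ∀ᶠ ε in 𝓝[>] 0, 0 ≤ u ε)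
    (hu : ∀ᶠ ε in 𝓝[>] 0, u ε ≤ S + C * ε ^ α) :
    ∃ M, ∀ᶠ ε in 𝓝[>] 0, u ε ^ p ≤ S ^ p + M * ε ^ α := by
  refine ⟨p * (S + C) ^ (p - 1) * C, ?_⟩
  filter_upwards [hu₀, hu, Ioo_mem_nhdsGT one_pos] with ε hu₀ε huε ⟨hε₀, hε₁⟩
  have hεα : ε ^ α ≤ 1 := rpow_le_one hε₀.le hε₁.le hα
  have hεα₀ : 0 ≤ ε ^ α := rpow_nonneg hε₀.le α
  set y := S + C * ε ^ α
  have hyS : S ≤ y := le_add_of_nonneg_right (mul_nonneg hC hεα₀)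
  have hyC : y ≤ S + C := by simp only [y]; nlinarith
  calc u ε ^ p ≤ y ^ p := rpow_le_rpow hu₀ε huε (by linarith)
    _ ≤ S ^ p + p * y ^ (p - 1) * (y - S) := by
      linarith [rpow_sub_rpow_le_mul_sub hS hyS hp]
    _ ≤ S ^ p + p * (S + C) ^ (p - 1) * C * ε ^ α := by
      have hy : y ^ (p - 1) ≤ (S + C) ^ (p - 1) :=
        rpow_le_rpow (hS.trans hyS) hyC (by linarith)
      have hyS' : y - S = C * ε ^ α := by simp only [y]; ring
      rw [hyS', ← mul_assoc _ C]
      gcongr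

lemma eventually_mul_rpow_lt_of_tendsto {v : ℝ → ℝ} {α : ℝ}
    (hv : Tendsto (fun ε => ε ^ (-α) * v ε) (𝓝[>] 0) atTop) (M : ℝ) :
    ∀ᶠ ε in 𝓝[>] 0, M * ε ^ α < v ε := by
  filter_upwards [hv.eventually_gt_atTop M, self_mem_nhdsWithin] with ε hε (hε₀ : 0 < ε)
  have hεα : 0 < ε ^ α := rpow_pos_of_pos hε₀ α
  rwa [rpow_neg hε₀.le, inv_mul_eq_div, lt_div_iff₀ hεα] at hε

-- `w2 ε = ‖w_ε‖²`, `wq ε = ‖w_ε‖_q^q` and `ts = 2*`.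
theorem stmt_12_general (N : ℕ) (hN : 3 ≤ N) (ts : ℝ)
    (S A B HAB c₂ SH : ℝ) (hS : 0 < S) (hHAB : 0 < HAB)
    (hc₂ : 0 < c₂) (hSH : SH = (A ^ 2 + B ^ 2) * S / HAB ^ (2 / ts))
    (w2 wq : ℝ → ℝ) (hw2pos : ∀ ε > 0, 0 < w2 ε)
    (hO : ∃ C > 0, ∃ δ > 0, ∀ ε ∈ Ioo (0 : ℝ) δ,
      |w2 ε - S| ≤ C * ε ^ (((N : ℝ) - 2) / 2))
    (hblow : Tendsto (fun ε : ℝ => ε ^ ((2 - (N : ℝ)) / 2) * wq ε)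
      (𝓝[>] 0) atTop) :
    ∀ᶠ ε in 𝓝[>] (0 : ℝ),
      1 / N * ((A ^ 2 + B ^ 2) / HAB ^ (2 / ts) * w2 ε) ^ ((N : ℝ) / 2) - c₂ * wq ε
        < 1 / N * SH ^ ((N : ℝ) / 2) := by
  obtain ⟨C, hC, δ, hδ, hw2S⟩ := hO
  have hN' : (3 : ℝ) ≤ N := by exact_mod_cast hN
  set k := (A ^ 2 + B ^ 2) / HAB ^ (2 / ts)
  have hk : 0 ≤ k := by positivity
  have hkw2 : ∀ᶠ ε in 𝓝[>] 0, k * w2 ε ≤ k * S + k * C * ε ^ (((N : ℝ) - 2) / 2) := by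
    filter_upwards [Ioo_mem_nhdsGT hδ] with ε hε
    rw [mul_assoc k, ← mul_add]
    gcongr
    linarith [(abs_le.mp (hw2S ε hε)).2]
  obtain ⟨M, hM⟩ := exists_eventually_rpow_le_rpow_add (by positivity) (by positivity)
    (by linarith : (0 : ℝ) ≤ ((N : ℝ) - 2) / 2) (by linarith : (1 : ℝ) ≤ (N : ℝ) / 2)
    (eventually_nhdsWithin_of_forall fun ε hε => mul_nonneg hk (hw2pos ε hε).le) hkw2
  have hNc₂wq : Tendsto (fun ε : ℝ => ε ^ (-(((N : ℝ) - 2) / 2)) * (N * c₂ * wq ε))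
      (𝓝[>] 0) atTop := by
    refine (hblow.const_mul_atTop (by positivity : (0 : ℝ) < N * c₂)).congr fun ε => ?_
    rw [show (2 - (N : ℝ)) / 2 = -(((N : ℝ) - 2) / 2) by ring]
    ring
  filter_upwards [hM, eventually_mul_rpow_lt_of_tendsto hNc₂wq M] with ε hM hwq
  have hSH' : SH = k * S := by rw [hSH]; ring
  have key : (k * w2 ε) ^ ((N : ℝ) / 2) < (k * S) ^ ((N : ℝ) / 2) + N * (c₂ * wq ε) := by
    linarith
  rw [hSH']
  field_simp
  linarith

/-- Brezis–Nirenberg type estimate: if `‖w_ε‖² = S + O(ε^{(N−2)/2})` and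
`ε^{(2−N)/2}‖w_ε‖_q^q → ∞` as `ε → 0⁺`, then for all sufficiently small `ε > 0`,
`(1/N)((A²+B²)/H(A,B)^{2/2*}·‖w_ε‖²)^{N/2} − c₂‖w_ε‖_q^q < (1/N)S_H^{N/2}`,
where `S_H = (A²+B²)S/H(A,B)^{2/2*}`. Here `w2 ε = ‖w_ε‖²` and `wq ε = ‖w_ε‖_q^q`. -/
theorem stmt_12 (N : ℕ) (hN : 3 ≤ N) (ts q : ℝ) (hts : ts = 2 * N / ((N : ℝ) - 2))
    (hq : 2 < q) (hqts : q < ts)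
    (S A B HAB c₂ SH : ℝ) (hS : 0 < S) (hA : 0 < A) (hB : 0 < B) (hHAB : 0 < HAB)
    (hc₂ : 0 < c₂) (hSH : SH = (A ^ 2 + B ^ 2) * S / HAB ^ (2 / ts))
    (w2 wq : ℝ → ℝ) (hw2pos : ∀ ε > 0, 0 < w2 ε) (hwqpos : ∀ ε > 0, 0 < wq ε)
    (hO : ∃ C > 0, ∃ δ > 0, ∀ ε ∈ Ioo (0 : ℝ) δ,
      |w2 ε - S| ≤ C * ε ^ (((N : ℝ) - 2) / 2))
    (hblow : Tendsto (fun ε : ℝ => ε ^ ((2 - (N : ℝ)) / 2) * wq ε)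
      (𝓝[>] 0) atTop) :
    ∀ᶠ ε in 𝓝[>] (0 : ℝ),
      1 / N * ((A ^ 2 + B ^ 2) / HAB ^ (2 / ts) * w2 ε) ^ ((N : ℝ) / 2) - c₂ * wq ε
        < 1 / N * SH ^ ((N : ℝ) / 2) :=
  stmt_12_general N hN ts S A B HAB c₂ SH hS hHAB hc₂ hSH w2 wq hw2pos hO hblow
end
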